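/- Let p > 5 be a prime. If p ≢ 17 and p ≢ 23 (mod 30), then λ(3, 5; 3p) = 0 and λ(3, 5; 5p) = 0. If p ≡ 17 or 23 (mod 30), then there exist integers x, y with p = 3x² + 5y², and for any such x, y one has λ(3, 5; 3p) = 36x² − 6p and λ(3, 5; 5p) = 10p − 60x². -/
import Mathlib

lemma sign_of_sq_one {e : ℤ} (h : e^2 = 1) : e = 1 ∨ e = -1 := by
  rcases mul_eq_zero.mp (show (e-1)*(e+1) = 0 by linear_combination h) with h'|h'
  · left; linarith
  · right; linarith

lemma classify (p : ℕ) (hp : p.Prime) (hp5 : 5 < p) (a b u v : ℤ)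
    (hab : (p:ℤ) = 3*a^2+5*b^2) (huv : u^2+15*v^2 = 8*(p:ℤ)) :
    ∃ ε δ : ℤ, (ε = 1 ∨ ε = -1) ∧ (δ = 1 ∨ δ = -1) ∧ u = 3*a*ε+5*b*δ ∧
      (v = a*δ - b*ε ∨ v = b*ε - a*δ) := by
  have hpz : (0:ℤ) < p := by exact_mod_cast hp.pos
  have hprime : Prime (p:ℤ) := by rw [Int.prime_iff_natAbs_prime]; simpa using hp
  have hp5' : (5:ℤ) < p := by exact_mod_cast hp5
  have key : (p:ℤ) ∣ 5*((b*u+3*a*v)*(b*u-3*a*v)) :=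
    ⟨u^2-24*a^2, by linear_combination (-u^2)*hab + (-3*a^2)*huv⟩
  have h5 : ¬ (p:ℤ) ∣ 5 := fun h => by
    have := Int.le_of_dvd (by norm_num) h; omega
  have hYY : (p:ℤ) ∣ (b*u+3*a*v) ∨ (p:ℤ) ∣ (b*u-3*a*v) := by
    rcases hprime.dvd_mul.mp key with h|h
    · exact absurd h h5
    · exact hprime.dvd_mul.mp h
  clear key
  rcases hYY with hY|hY
  · obtain ⟨d, hd⟩ := hY
    have hXY : 3*(a*u-5*b*v)^2 + 5*(b*u+3*a*v)^2 = 8*(p:ℤ)^2 := by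
      linear_combination (-8*(p:ℤ))*hab + (3*a^2+5*b^2)*huv
    have hpX : (p:ℤ) ∣ (a*u-5*b*v) := by
      have h3X : (p:ℤ) ∣ 3*(a*u-5*b*v)^2 :=
        ⟨8*p-5*p*d^2, by linear_combination hXY + (-5*(b*u+3*a*v+(p:ℤ)*d))*hd⟩
      rcases hprime.dvd_mul.mp h3X with h|h
      · exact absurd (Int.le_of_dvd (by norm_num) h) (by omega)
      · exact hprime.dvd_of_dvd_pow h
    obtain ⟨e, he⟩ := hpX
    have h8 : 3*e^2 + 5*d^2 = 8 := by
      have h0 : (p:ℤ)^2 ≠ 0 := pow_ne_zero _ (by positivity)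
      refine mul_left_cancel₀ h0 ?_
      linear_combination (-1)*hXY + (-3*(a*u-5*b*v+(p:ℤ)*e))*he + (-5*(b*u+3*a*v+(p:ℤ)*d))*hd + (2*(3*a^2+5*b^2))*huv - 16*(p:ℤ)*hab
    obtain ⟨D, hD⟩ : ∃ D, d^2 = D := ⟨_, rfl⟩
    obtain ⟨E, hE⟩ : ∃ E, e^2 = E := ⟨_, rfl⟩
    have hD0 : 0 ≤ D := hD ▸ sq_nonneg d
    have hE0 : 0 ≤ E := hE ▸ sq_nonneg e
    have h8' : 3*E + 5*D = 8 := by rw [← hD, ← hE]; exact h8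
    have hDE : D = 1 ∧ E = 1 := by omega
    have hd2 : d^2 = 1 := by rw [hD]; exact hDE.1
    have he2 : e^2 = 1 := by rw [hE]; exact hDE.2
    have hpne : (p:ℤ) ≠ 0 := by positivity
    refine ⟨e, d, sign_of_sq_one he2, sign_of_sq_one hd2, ?_, Or.inl ?_⟩
    · exact mul_left_cancel₀ hpne (show (p:ℤ)*u = (p:ℤ)*(3*a*e+5*b*d) by
        linear_combination u*hab + 3*a*he + 5*b*hd)
    · exact mul_left_cancel₀ hpne (show (p:ℤ)*v = (p:ℤ)*(a*d-b*e) by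
        linear_combination v*hab + a*hd - b*he)
  · obtain ⟨d, hd⟩ := hY
    have hXY : 3*(a*u+5*b*v)^2 + 5*(b*u-3*a*v)^2 = 8*(p:ℤ)^2 := by
      linear_combination (-8*(p:ℤ))*hab + (3*a^2+5*b^2)*huv
    have hpX : (p:ℤ) ∣ (a*u+5*b*v) := by
      have h3X : (p:ℤ) ∣ 3*(a*u+5*b*v)^2 :=
        ⟨8*p-5*p*d^2, by linear_combination hXY + (-5*(b*u-3*a*v+(p:ℤ)*d))*hd⟩
      rcases hprime.dvd_mul.mp h3X with h|h
      · exact absurd (Int.le_of_dvd (by norm_num) h) (by omega)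
      · exact hprime.dvd_of_dvd_pow h
    obtain ⟨e, he⟩ := hpX
    have h8 : 3*e^2 + 5*d^2 = 8 := by
      have h0 : (p:ℤ)^2 ≠ 0 := pow_ne_zero _ (by positivity)
      refine mul_left_cancel₀ h0 ?_
      linear_combination (-1)*hXY + (-3*(a*u+5*b*v+(p:ℤ)*e))*he + (-5*(b*u-3*a*v+(p:ℤ)*d))*hd + (2*(3*a^2+5*b^2))*huv - 16*(p:ℤ)*hab
    obtain ⟨D, hD⟩ : ∃ D, d^2 = D := ⟨_, rfl⟩
    obtain ⟨E, hE⟩ : ∃ E, e^2 = E := ⟨_, rfl⟩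
    have hD0 : 0 ≤ D := hD ▸ sq_nonneg d
    have hE0 : 0 ≤ E := hE ▸ sq_nonneg e
    have h8' : 3*E + 5*D = 8 := by rw [← hD, ← hE]; exact h8
    have hDE : D = 1 ∧ E = 1 := by omega
    have hd2 : d^2 = 1 := by rw [hD]; exact hDE.1
    have he2 : e^2 = 1 := by rw [hE]; exact hDE.2
    have hpne : (p:ℤ) ≠ 0 := by positivity
    refine ⟨e, d, sign_of_sq_one he2, sign_of_sq_one hd2, ?_, Or.inr ?_⟩
    · exact mul_left_cancel₀ hpne (show (p:ℤ)*u = (p:ℤ)*(3*a*e+5*b*d) by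
        linear_combination u*hab + 3*a*he + 5*b*hd)
    · exact mul_left_cancel₀ hpne (show (p:ℤ)*v = (p:ℤ)*(b*e-a*d) by
        linear_combination v*hab + b*he - a*hd)

lemma natCast_zmod_of_mod {n r p : ℕ} (h : p % n = r) : (p : ZMod n) = (r : ZMod n) := by
  conv_lhs => rw [← Nat.mod_add_div p n, h]
  push_cast
  simp [ZMod.natCast_self]

lemma cast_int_eq {n : ℕ} {x y : ℤ} (h : x = y) : (x : ZMod n) = (y : ZMod n) := by rw [h]

section descent
variable (p : ℕ) (hp : p.Prime) (hp5 : 5 < p) (h3 : p % 3 = 2) (h5 : p % 5 = 2 ∨ p % 5 = 3)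

include hp hp5 h3 h5

lemma no1 : ∀ x y : ℤ, x^2 + 15*y^2 = (p:ℤ) → False := by
  intro x y h
  have hc := cast_int_eq (n := 3) h
  push_cast at hc
  rw [natCast_zmod_of_mod h3] at hc
  revert hc
  have : ∀ X Y : ZMod 3, ¬ (X^2 + 15*Y^2 = (2:ℕ)) := by decide
  exact this _ _

lemma p8 : (p : ZMod 8) = 1 ∨ (p : ZMod 8) = 3 ∨ (p : ZMod 8) = 5 ∨ (p : ZMod 8) = 7 := by
  have h2 : p % 2 = 1 := (Nat.Prime.eq_two_or_odd hp).resolve_left (by omega)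
  have : p % 8 = 1 ∨ p % 8 = 3 ∨ p % 8 = 5 ∨ p % 8 = 7 := by omega
  rcases this with h|h|h|h
  · exact Or.inl (by rw [natCast_zmod_of_mod h]; rfl)
  · exact Or.inr (Or.inl (by rw [natCast_zmod_of_mod h]; rfl))
  · exact Or.inr (Or.inr (Or.inl (by rw [natCast_zmod_of_mod h]; rfl)))
  · exact Or.inr (Or.inr (Or.inr (by rw [natCast_zmod_of_mod h]; rfl)))

lemma no2mod8 : ∀ (k : ℤ), (k = 2 ∨ k = 6 ∨ k = 10 ∨ k = 14) →
    ∀ x y : ℤ, x^2 + 15*y^2 = k*(p:ℤ) → False := by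
  intro k hk x y h
  have hc := cast_int_eq (n := 8) h
  push_cast at hc
  have hdec : ∀ X Y P : ZMod 8, (P = 1 ∨ P = 3 ∨ P = 5 ∨ P = 7) →
      ¬ (X^2+15*Y^2 = 2*P ∨ X^2+15*Y^2 = 6*P ∨ X^2+15*Y^2 = 10*P ∨ X^2+15*Y^2 = 14*P) := by
    decide
  refine hdec (x : ZMod 8) (y : ZMod 8) (p : ZMod 8) (p8 p hp hp5 h3 h5) ?_
  rcases hk with rfl|rfl|rfl|rfl
  · left; push_cast at hc ⊢; linear_combination hc
  · right; left; push_cast at hc ⊢; linear_combination hc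
  · right; right; left; push_cast at hc ⊢; linear_combination hc
  · right; right; right; push_cast at hc ⊢; linear_combination hc

end descent

section descent2
set_option linter.unusedSectionVars false
variable (p : ℕ) (hp : p.Prime) (hp5 : 5 < p) (h3 : p % 3 = 2) (h5 : p % 5 = 2 ∨ p % 5 = 3)
include hp hp5 h3 h5

lemma prime3 : Prime (3:ℤ) := Int.prime_three
lemma prime5 : Prime (5:ℤ) := by
  rw [Int.prime_iff_natAbs_prime]; norm_num

lemma done3 : ∀ x y : ℤ, x^2 + 15*y^2 = 3*(p:ℤ) → ∃ a b : ℤ, (p:ℤ) = 3*a^2+5*b^2 := by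
  intro x y h
  have hdx : (3:ℤ) ∣ x := by
    refine Int.prime_three.dvd_of_dvd_pow (n := 2) ⟨(p:ℤ) - 5*y^2, by linarith⟩
  obtain ⟨t, rfl⟩ := hdx
  refine ⟨t, y, ?_⟩
  refine mul_left_cancel₀ (show (3:ℤ) ≠ 0 by norm_num) ?_
  linear_combination -h

lemma done5 : ∀ x y : ℤ, x^2 + 15*y^2 = 5*(p:ℤ) → ∃ a b : ℤ, (p:ℤ) = 3*a^2+5*b^2 := by
  intro x y h
  have hdx : (5:ℤ) ∣ x := by
    refine (prime5 p hp hp5 h3 h5).dvd_of_dvd_pow (n := 2) ⟨(p:ℤ) - 3*y^2, by linarith⟩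
  obtain ⟨t, rfl⟩ := hdx
  refine ⟨y, t, ?_⟩
  refine mul_left_cancel₀ (show (5:ℤ) ≠ 0 by norm_num) ?_
  linear_combination -h

lemma no9 : ∀ x y : ℤ, x^2 + 15*y^2 = 9*(p:ℤ) → False := by
  intro x y h
  have hdx : (3:ℤ) ∣ x := Int.prime_three.dvd_of_dvd_pow (n := 2) ⟨3*(p:ℤ) - 5*y^2, by linarith⟩
  obtain ⟨t, rfl⟩ := hdx
  have hdy : (3:ℤ) ∣ y := by
    refine Int.prime_three.dvd_of_dvd_pow (n := 2) ?_
    have h15 : (3:ℤ) ∣ 5*y^2 := ⟨(p:ℤ) - t^2, mul_left_cancel₀ (show (3:ℤ) ≠ 0 by norm_num)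
      (show (3:ℤ)*(5*y^2) = 3*(3*((p:ℤ)-t^2)) by linear_combination h)⟩
    rcases Int.prime_three.dvd_mul.mp h15 with h'|h'
    · norm_num at h'
    · exact h'
  obtain ⟨s, rfl⟩ := hdy
  refine no1 p hp hp5 h3 h5 t s ?_
  refine mul_left_cancel₀ (show (9:ℤ) ≠ 0 by norm_num) ?_
  linear_combination h

lemma no15 : ∀ x y : ℤ, x^2 + 15*y^2 = 15*(p:ℤ) → False := by
  intro x y h
  have hdx : (3:ℤ) ∣ x := Int.prime_three.dvd_of_dvd_pow (n := 2) ⟨5*(p:ℤ) - 5*y^2, by linarith⟩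
  obtain ⟨t, rfl⟩ := hdx
  -- 9t² + 15y² = 15p → 3t²+5y²=5p → 5 ∣ 3t²
  have hdt : (5:ℤ) ∣ t := by
    refine (prime5 p hp hp5 h3 h5).dvd_of_dvd_pow (n := 2) ?_
    have h15 : (5:ℤ) ∣ 3*t^2 := ⟨(p:ℤ) - y^2, mul_left_cancel₀ (show (3:ℤ) ≠ 0 by norm_num)
      (show (3:ℤ)*(3*t^2) = 3*(5*((p:ℤ)-y^2)) by linear_combination h)⟩
    rcases (prime5 p hp hp5 h3 h5).dvd_mul.mp h15 with h'|h'
    · norm_num at h'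
    · exact h'
  obtain ⟨s, rfl⟩ := hdt
  refine no1 p hp hp5 h3 h5 y s ?_
  refine mul_left_cancel₀ (show (15:ℤ) ≠ 0 by norm_num) ?_
  linear_combination h

lemma noq : ∀ (q : ℕ), (q = 7 ∨ q = 11 ∨ q = 13) →
    ∀ x y : ℤ, x^2 + 15*y^2 = (q:ℤ)*(p:ℤ) → False := by
  intro q hq x y h
  have hdec7 : ∀ X Y : ZMod 7, X^2+15*Y^2 = 0 → X = 0 ∧ Y = 0 := by decide
  have hdec11 : ∀ X Y : ZMod 11, X^2+15*Y^2 = 0 → X = 0 ∧ Y = 0 := by decide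
  have hdec13 : ∀ X Y : ZMod 13, X^2+15*Y^2 = 0 → X = 0 ∧ Y = 0 := by decide
  have hxy : (q:ℤ) ∣ x ∧ (q:ℤ) ∣ y := by
    have hc := cast_int_eq (n := q) h
    push_cast at hc
    rw [ZMod.natCast_self] at hc
    rw [zero_mul] at hc
    constructor <;> rw [← ZMod.intCast_zmod_eq_zero_iff_dvd]
    · rcases hq with rfl|rfl|rfl
      · exact (hdec7 _ _ hc).1
      · exact (hdec11 _ _ hc).1
      · exact (hdec13 _ _ hc).1
    · rcases hq with rfl|rfl|rfl
      · exact (hdec7 _ _ hc).2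
      · exact (hdec11 _ _ hc).2
      · exact (hdec13 _ _ hc).2
  obtain ⟨⟨x', rfl⟩, ⟨y', rfl⟩⟩ := hxy
  have hqp : (q:ℤ) ∣ (p:ℤ) := by
    have hq0 : (q:ℤ) ≠ 0 := by rcases hq with rfl|rfl|rfl <;> norm_num
    refine ⟨x'^2+15*y'^2, ?_⟩
    refine mul_left_cancel₀ hq0 ?_
    linear_combination -h
  have hqp' : q ∣ p := Int.ofNat_dvd.mp hqp
  have := (Nat.Prime.eq_one_or_self_of_dvd hp q hqp')
  rcases hq with rfl|rfl|rfl <;> omega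

end descent2

section descent3
set_option linter.unusedSectionVars false
variable (p : ℕ) (hp : p.Prime) (hp5 : 5 < p) (h3 : p % 3 = 2) (h5 : p % 5 = 2 ∨ p % 5 = 3)
include hp hp5 h3 h5

lemma done8odd : ∀ x y : ℤ, x % 2 = 1 → y % 2 = 1 → x^2 + 15*y^2 = 8*(p:ℤ) →
    ∃ a b : ℤ, (p:ℤ) = 3*a^2+5*b^2 := by
  intro x y hx hy h
  have hpodd : p % 2 = 1 := (Nat.Prime.eq_two_or_odd hp).resolve_left (by omega)
  obtain ⟨q, hq⟩ : ∃ q : ℕ, p = 2*q+1 := ⟨p/2, by omega⟩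
  have hc : ((x : ZMod 16))^2 + 15*(y : ZMod 16)^2 = 8 := by
    have := cast_int_eq (n := 16) h
    push_cast at this
    rw [this, hq]
    push_cast
    ring_nf
    rw [show ((16:ZMod 16)) = 0 by decide]
    ring
  have hdec : ∀ X Y : ZMod 16, X^2+15*Y^2 = 8 →
      (X+5*Y = 0 ∨ X+5*Y = 8 ∨ X-5*Y = 0 ∨ X-5*Y = 8) := by decide
  have hw : ∃ w : ℤ, w^2 = y^2 ∧ (8:ℤ) ∣ (x+5*w) := by
    rcases hdec _ _ hc with h'|h'|h'|h'
    · refine ⟨y, rfl, ?_⟩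
      have : ((x+5*y : ℤ) : ZMod 16) = 0 := by push_cast; rw [h']
      have h16 := (ZMod.intCast_zmod_eq_zero_iff_dvd _ 16).mp this
      omega
    · refine ⟨y, rfl, ?_⟩
      have : ((x+5*y-8 : ℤ) : ZMod 16) = 0 := by push_cast; rw [show ((x:ZMod 16)+5*(y:ZMod 16)-8 : ZMod 16) = (x:ZMod 16)+5*(y:ZMod 16)-8 from rfl]; rw [h']; decide
      have h16 := (ZMod.intCast_zmod_eq_zero_iff_dvd _ 16).mp this
      omega
    · refine ⟨-y, by ring, ?_⟩
      have : ((x-5*y : ℤ) : ZMod 16) = 0 := by push_cast; rw [h']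
      have h16 := (ZMod.intCast_zmod_eq_zero_iff_dvd _ 16).mp this
      have : x + 5*(-y) = x - 5*y := by ring
      rw [this]; omega
    · refine ⟨-y, by ring, ?_⟩
      have : ((x-5*y-8 : ℤ) : ZMod 16) = 0 := by push_cast; rw [show ((x:ZMod 16)-5*(y:ZMod 16)-8 : ZMod 16) = (x:ZMod 16)-5*(y:ZMod 16)-8 from rfl]; rw [h']; decide
      have h16 := (ZMod.intCast_zmod_eq_zero_iff_dvd _ 16).mp this
      have : x + 5*(-y) = x - 5*y := by ring
      rw [this]; omega
  obtain ⟨w, hw2, ⟨A, hA⟩⟩ := hw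
  have hB : x - 3*w = 8*(A - w) := by linarith
  refine ⟨A, A - w, ?_⟩
  refine mul_left_cancel₀ (show (64:ℤ) ≠ 0 by norm_num) ?_
  linear_combination (-8)*h + (-120)*hw2 + (3*(x+5*w+8*A))*hA + (5*(x-3*w+8*(A-w)))*hB

end descent3

section descent4
set_option linter.unusedSectionVars false
variable (p : ℕ) (hp : p.Prime) (hp5 : 5 < p) (h3 : p % 3 = 2) (h5 : p % 5 = 2 ∨ p % 5 = 3)
include hp hp5 h3 h5

lemma noOddEven : ∀ x y c : ℤ, x % 2 = 0 → y % 2 = 1 → x^2+15*y^2 = 2*c → False := by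
  intro x y c hx hy h
  obtain ⟨m, rfl⟩ : ∃ m, x = 2*m := ⟨x/2, by omega⟩
  obtain ⟨n, rfl⟩ : ∃ n, y = 2*n+1 := ⟨y/2, by omega⟩
  obtain ⟨M, hM⟩ : ∃ M, m^2 = M := ⟨_, rfl⟩
  obtain ⟨N, hN⟩ : ∃ N, n^2 = N := ⟨_, rfl⟩
  have : 4*M + 60*N + 60*n + 15 = 2*c := by rw [← hM, ← hN]; linear_combination h
  omega

lemma noEvenOdd : ∀ x y c : ℤ, x % 2 = 1 → y % 2 = 0 → x^2+15*y^2 = 2*c → False := by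
  intro x y c hx hy h
  obtain ⟨m, rfl⟩ : ∃ m, x = 2*m+1 := ⟨x/2, by omega⟩
  obtain ⟨n, rfl⟩ : ∃ n, y = 2*n := ⟨y/2, by omega⟩
  obtain ⟨M, hM⟩ : ∃ M, m^2 = M := ⟨_, rfl⟩
  obtain ⟨N, hN⟩ : ∃ N, n^2 = N := ⟨_, rfl⟩
  have : 4*M + 4*m + 1 + 60*N = 2*c := by rw [← hM, ← hN]; linear_combination h
  omega

lemma noOddOdd412 : ∀ x y : ℤ, x % 2 = 1 → y % 2 = 1 →
    (x^2+15*y^2 = 4*(p:ℤ) ∨ x^2+15*y^2 = 12*(p:ℤ)) → False := by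
  intro x y hx hy h
  have hpodd : p % 2 = 1 := (Nat.Prime.eq_two_or_odd hp).resolve_left (by omega)
  obtain ⟨m, rfl⟩ : ∃ m, x = 2*m+1 := ⟨x/2, by omega⟩
  obtain ⟨n, rfl⟩ : ∃ n, y = 2*n+1 := ⟨y/2, by omega⟩
  obtain ⟨M, hM⟩ : ∃ M, m^2+m = M := ⟨_, rfl⟩
  obtain ⟨N, hN⟩ : ∃ N, n^2+n = N := ⟨_, rfl⟩
  obtain ⟨q, hq⟩ : ∃ q : ℕ, p = 2*q+1 := ⟨p/2, by omega⟩
  have hMe : M % 2 = 0 := by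
    rcases Int.emod_two_eq m with hm|hm
    · obtain ⟨j, rfl⟩ : ∃ j, m = 2*j := ⟨m/2, by omega⟩
      obtain ⟨J, hJ⟩ : ∃ J, j^2 = J := ⟨_, rfl⟩
      have : M = 4*J+2*j := by rw [← hM, ← hJ]; ring
      omega
    · obtain ⟨j, rfl⟩ : ∃ j, m = 2*j+1 := ⟨m/2, by omega⟩
      obtain ⟨J, hJ⟩ : ∃ J, j^2 = J := ⟨_, rfl⟩
      have : M = 4*J+6*j+2 := by rw [← hM, ← hJ]; ring
      omega
  have hNe : N % 2 = 0 := by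
    rcases Int.emod_two_eq n with hn|hn
    · obtain ⟨j, rfl⟩ : ∃ j, n = 2*j := ⟨n/2, by omega⟩
      obtain ⟨J, hJ⟩ : ∃ J, j^2 = J := ⟨_, rfl⟩
      have : N = 4*J+2*j := by rw [← hN, ← hJ]; ring
      omega
    · obtain ⟨j, rfl⟩ : ∃ j, n = 2*j+1 := ⟨n/2, by omega⟩
      obtain ⟨J, hJ⟩ : ∃ J, j^2 = J := ⟨_, rfl⟩
      have : N = 4*J+6*j+2 := by rw [← hN, ← hJ]; ring
      omega
  rcases h with h|h
  · have : 4*M + 60*N + 16 = 4*((2:ℤ)*q+1) := by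
      rw [← hM, ← hN]; push_cast [hq] at h ⊢; linear_combination h
    omega
  · have : 4*M + 60*N + 16 = 12*((2:ℤ)*q+1) := by
      rw [← hM, ← hN]; push_cast [hq] at h ⊢; linear_combination h
    omega

lemma descent : ∀ k : ℤ, 1 ≤ k → k ≤ 15 → ∀ x y : ℤ, x^2 + 15*y^2 = k*(p:ℤ) →
    ∃ a b : ℤ, (p:ℤ) = 3*a^2+5*b^2 := by
  intro k hk1 hk2 x y h
  interval_cases k
  · exact (no1 p hp hp5 h3 h5 x y (by linarith)).elim
  · exact (no2mod8 p hp hp5 h3 h5 2 (by norm_num) x y h).elim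
  · exact done3 p hp hp5 h3 h5 x y h
  · rcases Int.emod_two_eq x with hx|hx <;> rcases Int.emod_two_eq y with hy|hy
    · obtain ⟨m, rfl⟩ : ∃ m, x = 2*m := ⟨x/2, by omega⟩
      obtain ⟨n, rfl⟩ : ∃ n, y = 2*n := ⟨y/2, by omega⟩
      exact (no1 p hp hp5 h3 h5 m n (mul_left_cancel₀ (show (4:ℤ) ≠ 0 by norm_num)
        (show (4:ℤ)*(m^2+15*n^2) = 4*(p:ℤ) by linear_combination h))).elim
    · exact (noOddEven p hp hp5 h3 h5 x y (2*(p:ℤ)) hx hy (by linarith)).elim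
    · exact (noEvenOdd p hp hp5 h3 h5 x y (2*(p:ℤ)) hx hy (by linarith)).elim
    · exact (noOddOdd412 p hp hp5 h3 h5 x y hx hy (Or.inl h)).elim
  · exact done5 p hp hp5 h3 h5 x y h
  · exact (no2mod8 p hp hp5 h3 h5 6 (by norm_num) x y h).elim
  · exact (noq p hp hp5 h3 h5 7 (by norm_num) x y (by push_cast; linarith)).elim
  · rcases Int.emod_two_eq x with hx|hx <;> rcases Int.emod_two_eq y with hy|hy
    · obtain ⟨m, rfl⟩ : ∃ m, x = 2*m := ⟨x/2, by omega⟩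
      obtain ⟨n, rfl⟩ : ∃ n, y = 2*n := ⟨y/2, by omega⟩
      exact (no2mod8 p hp hp5 h3 h5 2 (by norm_num) m n (mul_left_cancel₀
        (show (4:ℤ) ≠ 0 by norm_num)
        (show (4:ℤ)*(m^2+15*n^2) = 4*(2*(p:ℤ)) by linear_combination h))).elim
    · exact (noOddEven p hp hp5 h3 h5 x y (4*(p:ℤ)) hx hy (by linarith)).elim
    · exact (noEvenOdd p hp hp5 h3 h5 x y (4*(p:ℤ)) hx hy (by linarith)).elim
    · exact done8odd p hp hp5 h3 h5 x y hx hy h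
  · exact (no9 p hp hp5 h3 h5 x y h).elim
  · exact (no2mod8 p hp hp5 h3 h5 10 (by norm_num) x y h).elim
  · exact (noq p hp hp5 h3 h5 11 (by norm_num) x y (by push_cast; linarith)).elim
  · rcases Int.emod_two_eq x with hx|hx <;> rcases Int.emod_two_eq y with hy|hy
    · obtain ⟨m, rfl⟩ : ∃ m, x = 2*m := ⟨x/2, by omega⟩
      obtain ⟨n, rfl⟩ : ∃ n, y = 2*n := ⟨y/2, by omega⟩
      exact done3 p hp hp5 h3 h5 m n (mul_left_cancel₀ (show (4:ℤ) ≠ 0 by norm_num)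
        (show (4:ℤ)*(m^2+15*n^2) = 4*(3*(p:ℤ)) by linear_combination h))
    · exact (noOddEven p hp hp5 h3 h5 x y (6*(p:ℤ)) hx hy (by linarith)).elim
    · exact (noEvenOdd p hp hp5 h3 h5 x y (6*(p:ℤ)) hx hy (by linarith)).elim
    · exact (noOddOdd412 p hp hp5 h3 h5 x y hx hy (Or.inr h)).elim
  · exact (noq p hp hp5 h3 h5 13 (by norm_num) x y (by push_cast; linarith)).elim
  · exact (no2mod8 p hp hp5 h3 h5 14 (by norm_num) x y h).elim
  · exact (no15 p hp hp5 h3 h5 x y h).elim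

end descent4

lemma thue (p : ℕ) (hp : p.Prime) (m : ℤ) :
    ∃ x y : ℤ, (p:ℤ) ∣ (x - m*y) ∧ x^2 ≤ (Nat.sqrt p : ℤ)^2 ∧ y^2 ≤ (Nat.sqrt p : ℤ)^2 ∧
      ¬(x = 0 ∧ y = 0) := by
  haveI : Fact p.Prime := ⟨hp⟩
  set r := Nat.sqrt p with hr
  have hcard : (Finset.univ : Finset (ZMod p)).card <
      ((Finset.range (r+1)) ×ˢ (Finset.range (r+1))).card := by
    rw [Finset.card_univ, ZMod.card, Finset.card_product, Finset.card_range]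
    exact Nat.lt_succ_sqrt p
  obtain ⟨a, ha, b, hb, hab, hfab⟩ :=
    Finset.exists_ne_map_eq_of_card_lt_of_maps_to (t := (Finset.univ : Finset (ZMod p)))
      hcard
      (fun (ij : ℕ × ℕ) _ => Finset.mem_univ ((ij.1 : ZMod p) - m * ij.2))
  obtain ⟨a1, a2⟩ := a
  obtain ⟨b1, b2⟩ := b
  simp only [Finset.mem_product, Finset.mem_range] at ha hb
  refine ⟨(a1:ℤ) - b1, (a2:ℤ) - b2, ?_, ?_, ?_, ?_⟩
  · rw [← ZMod.intCast_zmod_eq_zero_iff_dvd]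
    push_cast
    have : ((a1 : ZMod p)) - m * a2 = (b1 : ZMod p) - m * b2 := hfab
    ring_nf
    ring_nf at this
    linear_combination this
  · have h1 : (a1 : ℤ) ≤ r := by exact_mod_cast Nat.lt_succ_iff.mp ha.1
    have h2 : (b1 : ℤ) ≤ r := by exact_mod_cast Nat.lt_succ_iff.mp hb.1
    have h3 : (0:ℤ) ≤ a1 := Int.natCast_nonneg _
    have h4 : (0:ℤ) ≤ b1 := Int.natCast_nonneg _
    nlinarith
  · have h1 : (a2 : ℤ) ≤ r := by exact_mod_cast Nat.lt_succ_iff.mp ha.2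
    have h2 : (b2 : ℤ) ≤ r := by exact_mod_cast Nat.lt_succ_iff.mp hb.2
    have h3 : (0:ℤ) ≤ a2 := Int.natCast_nonneg _
    have h4 : (0:ℤ) ≤ b2 := Int.natCast_nonneg _
    nlinarith
  · rintro ⟨h1, h2⟩
    apply hab
    have : a1 = b1 := by omega
    have : a2 = b2 := by omega
    simp_all

lemma qr_neg15 (p : ℕ) (hp : p.Prime) (hp5 : 5 < p) (h30 : p % 30 = 17 ∨ p % 30 = 23) :
    IsSquare ((-15 : ℤ) : ZMod p) := by
  haveI : Fact p.Prime := ⟨hp⟩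
  have hodd : p % 2 = 1 := (Nat.Prime.eq_two_or_odd hp).resolve_left (by omega)
  have hpodd : Odd p := Nat.odd_iff.mpr hodd
  have hne : ((-15 : ℤ) : ZMod p) ≠ 0 := by
    rw [Ne, ZMod.intCast_zmod_eq_zero_iff_dvd]
    intro hdvd
    have h15 : (p:ℤ) ∣ 15 := (dvd_neg).mp hdvd
    have := Int.le_of_dvd (by norm_num) h15
    omega
  rw [← legendreSym.eq_one_iff p hne]
  rw [jacobiSym.legendreSym.to_jacobiSym]
  have h15 : ((-15 : ℤ)) = (-1) * (15:ℕ) := by norm_num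
  rw [h15, jacobiSym.mul_left, jacobiSym.at_neg_one hpodd]
  have hrec := jacobiSym.quadratic_reciprocity (show Odd 15 by decide) hpodd
  rw [hrec]
  rw [ZMod.χ₄_eq_neg_one_pow hodd]
  have : ((-1:ℤ)) ^ (15/2 * (p/2)) = (-1) ^ (p/2) := by
    norm_num
    rw [pow_mul]
    norm_num
  rw [this]
  have hJ : jacobiSym (p:ℤ) 15 = 1 := by
    rw [jacobiSym.mod_left]
    have : ((p:ℤ)) % (15:ℕ) = ((p % 15 : ℕ) : ℤ) := by push_cast; omega
    rw [this]
    have h15' : p % 15 = 2 ∨ p % 15 = 8 := by omega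
    rcases h15' with h'|h'
    · rw [h']; rw [show ((2:ℕ):ℤ) = (2:ℤ) by norm_num]
      rw [jacobiSym.at_two (by decide)]
      decide
    · rw [h']; rw [show ((8:ℕ):ℤ) = (2:ℤ)^3 by norm_num]
      rw [jacobiSym.pow_left]
      rw [jacobiSym.at_two (by decide)]
      decide
  rw [hJ]
  rw [mul_one, ← pow_add]
  have : (p/2 + p/2) = 2*(p/2) := by ring
  rw [this, pow_mul]
  norm_num

lemma exists_rep (p : ℕ) (hp : p.Prime) (hp5 : 5 < p) (h30 : p % 30 = 17 ∨ p % 30 = 23) :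
    ∃ a b : ℤ, (p:ℤ) = 3*a^2+5*b^2 := by
  have h3 : p % 3 = 2 := by omega
  have h5 : p % 5 = 2 ∨ p % 5 = 3 := by omega
  have hp0 : (0:ℤ) < p := by exact_mod_cast hp.pos
  obtain ⟨s, hs⟩ := qr_neg15 p hp hp5 h30
  have hm : (p:ℤ) ∣ ((s.val:ℤ))^2 + 15 := by
    rw [← ZMod.intCast_zmod_eq_zero_iff_dvd]
    push_cast
    have hs' : ((s.val : ℕ) : ZMod p) = s := by
      haveI : NeZero p := ⟨hp.ne_zero⟩
      rw [ZMod.natCast_val, ZMod.cast_id]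
    rw [hs']
    push_cast at hs
    linear_combination -hs
  set m : ℤ := (s.val : ℤ) with hmdef
  obtain ⟨x, y, hdvd, hx2, hy2, hxy0⟩ := thue p hp m
  have hdvd2 : (p:ℤ) ∣ x^2+15*y^2 := by
    have h1 : (p:ℤ) ∣ (x - m*y)*(x + m*y) := Dvd.dvd.mul_right hdvd _
    have h2 : (p:ℤ) ∣ (m^2+15)*y^2 := Dvd.dvd.mul_right hm _
    have heq : x^2+15*y^2 = (x-m*y)*(x+m*y) + (m^2+15)*y^2 := by ring
    rw [heq]; exact dvd_add h1 h2
  obtain ⟨k, hk⟩ := hdvd2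
  have hr2 : ((Nat.sqrt p : ℤ))^2 < (p:ℤ) := by
    have h1 : Nat.sqrt p ^ 2 ≤ p := Nat.sqrt_le' p
    have hne : Nat.sqrt p ^ 2 ≠ p := by
      intro hh
      rcases hp.eq_one_or_self_of_dvd (Nat.sqrt p) ⟨Nat.sqrt p, by conv_lhs => rw [← hh, Nat.pow_two]⟩ with h'|h'
      · rw [h'] at hh; simp at hh; omega
      · rw [h'] at hh; nlinarith
    have : ((Nat.sqrt p ^ 2 : ℕ) : ℤ) < (p:ℤ) := by exact_mod_cast lt_of_le_of_ne h1 hne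
    push_cast at this
    exact this
  have hpos : 0 < x^2+15*y^2 := by
    rcases not_and_or.mp hxy0 with h|h
    · have h2 : 0 < x^2 := lt_of_le_of_ne (sq_nonneg x) (Ne.symm (pow_ne_zero _ h))
      linarith [sq_nonneg y]
    · have h2 : 0 < y^2 := lt_of_le_of_ne (sq_nonneg y) (Ne.symm (pow_ne_zero _ h))
      linarith [sq_nonneg x]
  have hk1 : 1 ≤ k := by nlinarith [hk, hpos, hp0]
  have hk15 : k ≤ 15 := by
    have hlt : (p:ℤ)*k < (p:ℤ)*16 := by nlinarith [hx2, hy2, hr2, hk]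
    have := lt_of_mul_lt_mul_left hlt (le_of_lt hp0)
    omega
  exact descent p hp hp5 h3 h5 k hk1 hk15 x y (by rw [hk]; ring)

lemma P1mod4 {a b : ℤ} (h2 : (a+b) % 2 = 1) : ((3*a+5*b)*(a-b)) % 4 = 3 := by
  rcases Int.emod_two_eq a with ha|ha
  · obtain ⟨j, rfl⟩ : ∃ j, a = 2*j := ⟨a/2, by omega⟩
    obtain ⟨k, rfl⟩ : ∃ k, b = 2*k+1 := ⟨b/2, by omega⟩
    obtain ⟨T, hT⟩ : ∃ T, (3*(2*j)+5*(2*k+1))*((2*j)-(2*k+1)) = 4*T - 1 :=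
      ⟨3*j^2+2*j*k+j-5*k^2-5*k-1, by ring⟩
    omega
  · obtain ⟨j, rfl⟩ : ∃ j, a = 2*j+1 := ⟨a/2, by omega⟩
    obtain ⟨k, rfl⟩ : ∃ k, b = 2*k := ⟨b/2, by omega⟩
    obtain ⟨T, hT⟩ : ∃ T, (3*(2*j+1)+5*(2*k))*((2*j+1)-(2*k)) = 4*T + 3 :=
      ⟨3*j^2+3*j+2*j*k+k-5*k^2, by ring⟩
    omega

lemma P2mod4 {a b : ℤ} (h2 : (a+b) % 2 = 1) : ((3*a-5*b)*(a+b)) % 4 = 3 := by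
  have := P1mod4 (a := a) (b := -b) (by omega)
  have he : (3*a+5*(-b))*(a-(-b)) = (3*a-5*b)*(a+b) := by ring
  rw [he] at this
  exact this

-- from X%4=1 and (X*Y)%4=3 conclude Y%4=3 (Y arbitrary)
lemma factor_mod4 {X Y : ℤ} (hX : X % 4 = 1) (hXY : (X*Y) % 4 = 3) : Y % 4 = 3 := by
  obtain ⟨q, rfl⟩ : ∃ q, X = 4*q+1 := ⟨X/4, by omega⟩
  obtain ⟨T, hT⟩ : ∃ T, (4*q+1)*Y = 4*T + Y := ⟨q*Y, by ring⟩
  omega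

section sets
variable (p : ℕ) (hp : p.Prime) (hp5 : 5 < p) (a b s : ℤ)
  (hab : (p:ℤ) = 3*a^2+5*b^2) (h2 : (a+b) % 2 = 1)
  (hn1 : (3*a+5*b) % 4 = 1) (hn2 : (a-b) % 4 = 3)
  (hs : s = 1 ∨ s = -1) (hm1 : (s*(3*a-5*b)) % 4 = 1) (hm2 : (s*(a+b)) % 4 = 3)
include hp hp5 hab h2 hn1 hn2 hs hm1 hm2

lemma S24_eq :
    {xy : ℤ × ℤ | xy.1 % 4 = 1 ∧ xy.2 % 4 = 1 ∧ 3*xy.1^2 + 5*xy.2^2 = 24*(p:ℤ)} =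
      ({((3*a+5*b : ℤ), (3*(a-b) : ℤ)), ((s*(3*a-5*b) : ℤ), (3*(s*(a+b)) : ℤ))} :
        Set (ℤ × ℤ)) := by
  ext ⟨x, y⟩
  simp only [Set.mem_setOf_eq, Set.mem_insert_iff, Set.mem_singleton_iff, Prod.mk.injEq]
  constructor
  · rintro ⟨hx4, hy4, heq⟩
    have h3y : (3:ℤ) ∣ y := by
      refine Int.prime_three.dvd_of_dvd_pow (n := 2) ?_
      have : (3:ℤ) ∣ 5*y^2 := ⟨8*(p:ℤ) - x^2, by linarith⟩
      rcases Int.prime_three.dvd_mul.mp this with h'|h'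
      · norm_num at h'
      · exact h'
    obtain ⟨z, rfl⟩ := h3y
    have hz4 : z % 4 = 3 := by omega
    have huv : x^2 + 15*z^2 = 8*(p:ℤ) := by
      refine mul_left_cancel₀ (show (3:ℤ) ≠ 0 by norm_num) ?_
      linear_combination heq
    obtain ⟨e, d, he, hd, hu, hv⟩ := classify p hp hp5 a b x z hab huv
    rcases he with rfl|rfl <;> rcases hd with rfl|rfl
    · -- e=1 d=1 : x = 3a+5b
      left
      have hx : x = 3*a+5*b := by linarith [hu]
      refine ⟨hx, ?_⟩
      rcases hv with hz|hz
      · have : z = a - b := by linarith [hz]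
        rw [this]
      · exfalso
        have : z = b - a := by linarith [hz]
        omega
    · -- e=1 d=-1 : x = 3a-5b ; need s = 1
      right
      have hx : x = 3*a-5*b := by linarith [hu]
      rcases hs with rfl|rfl
      · refine ⟨by omega, ?_⟩
        rcases hv with hz|hz
        · exfalso
          have : z = -a - b := by linarith [hz]
          omega
        · have : z = a + b := by linarith [hz]
          subst this; ring_nf
      · exfalso
        omega
    · -- e=-1 d=1 : x = -(3a-5b) ; need s = -1
      right
      have hx : x = -(3*a)+5*b := by linarith [hu]
      rcases hs with rfl|rfl
      · exfalso; omega
      · refine ⟨by omega, ?_⟩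
        rcases hv with hz|hz
        · have : z = a + b := by linarith [hz]
          exfalso; omega
        · have : z = -(a+b) := by linarith [hz]
          subst this; ring_nf
    · -- e=-1 d=-1 : x = -(3a+5b), contradiction
      exfalso
      have hx : x = -(3*a)-5*b := by linarith [hu]
      omega
  · rintro (⟨hx, hy⟩|⟨hx, hy⟩)
    · subst hx; subst hy
      refine ⟨hn1, by omega, by linear_combination (-24)*hab⟩
    · subst hx; subst hy
      rcases hs with rfl|rfl
      · refine ⟨by omega, by omega, by linear_combination (-24)*hab⟩
      · refine ⟨by omega, by omega, by linear_combination (-24)*hab⟩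

lemma S40_eq :
    {xy : ℤ × ℤ | xy.1 % 4 = 1 ∧ xy.2 % 4 = 1 ∧ 3*xy.1^2 + 5*xy.2^2 = 40*(p:ℤ)} =
      ({((5*(b-a) : ℤ), (3*a+5*b : ℤ)), ((-(5*(s*(a+b))) : ℤ), (s*(3*a-5*b) : ℤ))} :
        Set (ℤ × ℤ)) := by
  have hprime5 : Prime (5:ℤ) := by rw [Int.prime_iff_natAbs_prime]; norm_num
  ext ⟨x, y⟩
  simp only [Set.mem_setOf_eq, Set.mem_insert_iff, Set.mem_singleton_iff, Prod.mk.injEq]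
  constructor
  · rintro ⟨hx4, hy4, heq⟩
    have h5x : (5:ℤ) ∣ x := by
      refine hprime5.dvd_of_dvd_pow (n := 2) ?_
      have : (5:ℤ) ∣ 3*x^2 := ⟨8*(p:ℤ) - y^2, by linarith⟩
      rcases hprime5.dvd_mul.mp this with h'|h'
      · norm_num at h'
      · exact h'
    obtain ⟨w, rfl⟩ := h5x
    have hw4 : w % 4 = 1 := by omega
    have huv : y^2 + 15*w^2 = 8*(p:ℤ) := by
      refine mul_left_cancel₀ (show (5:ℤ) ≠ 0 by norm_num) ?_
      linear_combination heq
    obtain ⟨e, d, he, hd, hu, hv⟩ := classify p hp hp5 a b y w hab huv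
    rcases he with rfl|rfl <;> rcases hd with rfl|rfl
    · left
      have hy : y = 3*a+5*b := by linarith [hu]
      refine ⟨?_, hy⟩
      rcases hv with hw|hw
      · exfalso
        have : w = a - b := by linarith [hw]
        omega
      · have : w = b - a := by linarith [hw]
        subst this; ring
    · right
      have hy : y = 3*a-5*b := by linarith [hu]
      rcases hs with rfl|rfl
      · refine ⟨?_, by omega⟩
        rcases hv with hw|hw
        · have : w = -a - b := by linarith [hw]
          subst this; ring
        · exfalso
          have : w = a + b := by linarith [hw]
          omega
      · exfalso; omega
    · right
      have hy : y = -(3*a)+5*b := by linarith [hu]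
      rcases hs with rfl|rfl
      · exfalso; omega
      · refine ⟨?_, by omega⟩
        rcases hv with hw|hw
        · have : w = a + b := by linarith [hw]
          subst this; ring
        · exfalso
          have : w = -(a+b) := by linarith [hw]
          omega
    · exfalso
      have hy : y = -(3*a)-5*b := by linarith [hu]
      omega
  · rintro (⟨hx, hy⟩|⟨hx, hy⟩)
    · subst hx; subst hy
      refine ⟨by omega, hn1, by linear_combination (-40)*hab⟩
    · subst hx; subst hy
      rcases hs with rfl|rfl
      · refine ⟨by omega, by omega, by linear_combination (-40)*hab⟩
      · refine ⟨by omega, by omega, by linear_combination (-40)*hab⟩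

end sets


lemma no8p (p : ℕ) (hp : p.Prime) (hp5 : 5 < p) (hm : p % 3 = 1 ∨ p % 5 = 1 ∨ p % 5 = 4) :
    ∀ u v : ℤ, u^2+15*v^2 = 8*(p:ℤ) → False := by
  intro u v h
  have hc3 := cast_int_eq (n := 3) h
  have hc5 := cast_int_eq (n := 5) h
  push_cast at hc3 hc5
  rcases hm with h'|h'|h'
  · rw [natCast_zmod_of_mod h'] at hc3
    exact (by decide : ∀ U V : ZMod 3, ¬(U^2+15*V^2 = 8*((1:ℕ):ZMod 3))) _ _ hc3
  · rw [natCast_zmod_of_mod h'] at hc5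
    exact (by decide : ∀ U V : ZMod 5, ¬(U^2+15*V^2 = 8*((1:ℕ):ZMod 5))) _ _ hc5
  · rw [natCast_zmod_of_mod h'] at hc5
    exact (by decide : ∀ U V : ZMod 5, ¬(U^2+15*V^2 = 8*((4:ℕ):ZMod 5))) _ _ hc5

/-- `lam a b N` is λ(a, b; N+1): the finite sum of x·y over all integer pairs (x, y)
with x ≡ y ≡ 1 (mod 4) and a·x² + b·y² = 8N + a + b. -/
noncomputable def lam (a b N : ℤ) : ℤ :=
  ∑ᶠ xy ∈ {xy : ℤ × ℤ | xy.1 % 4 = 1 ∧ xy.2 % 4 = 1 ∧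
      a * xy.1 ^ 2 + b * xy.2 ^ 2 = 8 * N + a + b}, xy.1 * xy.2

lemma sqpar (t : ℤ) : t^2 % 2 = t % 2 := by
  rcases Int.emod_two_eq t with ht|ht
  · obtain ⟨j, rfl⟩ : ∃ j, t = 2*j := ⟨t/2, by omega⟩
    obtain ⟨J, hJ⟩ : ∃ J, j^2 = J := ⟨_, rfl⟩
    have : (2*j)^2 = 4*J := by rw [← hJ]; ring
    omega
  · obtain ⟨j, rfl⟩ : ∃ j, t = 2*j+1 := ⟨t/2, by omega⟩
    obtain ⟨J, hJ⟩ : ∃ J, j^2 = J := ⟨_, rfl⟩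
    have : (2*j+1)^2 = 4*J+4*j+1 := by rw [← hJ]; ring
    omega

lemma lam_eval (p : ℕ) (hp : p.Prime) (hp5 : 5 < p) (a0 b0 : ℤ)
    (hab0 : (p:ℤ) = 3*a0^2+5*b0^2) :
    lam 3 5 (3*(p:ℤ)-1) = 36*a0^2 - 6*(p:ℤ) ∧ lam 3 5 (5*(p:ℤ)-1) = 10*(p:ℤ) - 60*a0^2 := by
  have hpodd : p % 2 = 1 := (Nat.Prime.eq_two_or_odd hp).resolve_left (by omega)
  obtain ⟨q, hq⟩ : ∃ q : ℕ, p = 2*q+1 := ⟨p/2, by omega⟩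
  have h2 : (a0+b0) % 2 = 1 := by
    obtain ⟨A, hA⟩ : ∃ A, a0^2 = A := ⟨_, rfl⟩
    obtain ⟨B, hB⟩ : ∃ B, b0^2 = B := ⟨_, rfl⟩
    have h1 : (2*(q:ℤ)+1) = 3*A+5*B := by
      rw [← hA, ← hB]
      push_cast [hq] at hab0
      linarith
    have h2 := sqpar a0
    have h3 := sqpar b0
    rw [hA] at h2
    rw [hB] at h3
    omega
  obtain ⟨a, b, ha2, hb2, hab, h2', hn1⟩ : ∃ a b : ℤ, a^2 = a0^2 ∧ b^2 = b0^2 ∧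
      (p:ℤ) = 3*a^2+5*b^2 ∧ (a+b)%2 = 1 ∧ (3*a+5*b)%4 = 1 := by
    have hodd1 : (3*a0+5*b0) % 2 = 1 := by omega
    rcases (show (3*a0+5*b0)%4 = 1 ∨ (3*a0+5*b0)%4 = 3 by omega) with h|h
    · exact ⟨a0, b0, rfl, rfl, hab0, h2, h⟩
    · refine ⟨-a0, -b0, by ring, by ring, by linear_combination hab0, by omega, by omega⟩
  have hn2 : (a-b) % 4 = 3 := factor_mod4 hn1 (P1mod4 h2')
  obtain ⟨s, hs, hm1⟩ : ∃ s : ℤ, (s = 1 ∨ s = -1) ∧ (s*(3*a-5*b)) % 4 = 1 := by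
    have hodd2 : (3*a-5*b) % 2 = 1 := by omega
    rcases (show (3*a-5*b)%4 = 1 ∨ (3*a-5*b)%4 = 3 by omega) with h|h
    · exact ⟨1, Or.inl rfl, by omega⟩
    · exact ⟨-1, Or.inr rfl, by omega⟩
  have hm2 : (s*(a+b)) % 4 = 3 := by
    refine factor_mod4 hm1 ?_
    rcases hs with rfl|rfl
    · have heq : (1*(3*a-5*b))*(1*(a+b)) = (3*a-5*b)*(a+b) := by ring
      rw [heq]; exact P2mod4 h2'
    · have heq : ((-1)*(3*a-5*b))*((-1)*(a+b)) = (3*a-5*b)*(a+b) := by ring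
      rw [heq]; exact P2mod4 h2'
  have ha0 : a ≠ 0 := by
    rintro rfl
    have h5p : (5:ℤ) ∣ (p:ℤ) := ⟨b^2, by linarith⟩
    have h5p' : (5:ℕ) ∣ p := by exact_mod_cast h5p
    have := hp.eq_one_or_self_of_dvd 5 h5p'
    omega
  have hb0 : b ≠ 0 := by
    rintro rfl
    have h3p : (3:ℤ) ∣ (p:ℤ) := ⟨a^2, by linarith⟩
    have h3p' : (3:ℕ) ∣ p := by exact_mod_cast h3p
    have := hp.eq_one_or_self_of_dvd 3 h3p'
    omega
  constructor
  · unfold lam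
    simp only [show (8*(3*(p:ℤ)-1)+3+5) = 24*(p:ℤ) from by ring]
    rw [S24_eq p hp hp5 a b s hab h2' hn1 hn2 hs hm1 hm2]
    have hne : ((3*a+5*b : ℤ), (3*(a-b) : ℤ)) ≠ ((s*(3*a-5*b) : ℤ), (3*(s*(a+b)) : ℤ)) := by
      intro hcontra
      rw [Prod.mk.injEq] at hcontra
      rcases hs with rfl|rfl <;> omega
    rw [finsum_mem_pair hne]
    rcases hs with rfl|rfl
    · linear_combination 6*hab + 36*ha2
    · linear_combination 6*hab + 36*ha2
  · unfold lam
    simp only [show (8*(5*(p:ℤ)-1)+3+5) = 40*(p:ℤ) from by ring]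
    rw [S40_eq p hp hp5 a b s hab h2' hn1 hn2 hs hm1 hm2]
    have hne : ((5*(b-a) : ℤ), (3*a+5*b : ℤ)) ≠ ((-(5*(s*(a+b))) : ℤ), (s*(3*a-5*b) : ℤ)) := by
      intro hcontra
      rw [Prod.mk.injEq] at hcontra
      rcases hs with rfl|rfl <;> omega
    rw [finsum_mem_pair hne]
    rcases hs with rfl|rfl
    · linear_combination (-10)*hab + (-60)*ha2
    · linear_combination (-10)*hab + (-60)*ha2

lemma lam_zero (p : ℕ) (hp : p.Prime) (hp5 : 5 < p)
    (hm : p % 3 = 1 ∨ p % 5 = 1 ∨ p % 5 = 4) :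
    lam 3 5 (3*(p:ℤ)-1) = 0 ∧ lam 3 5 (5*(p:ℤ)-1) = 0 := by
  constructor
  · unfold lam
    simp only [show (8*(3*(p:ℤ)-1)+3+5) = 24*(p:ℤ) from by ring]
    have hempty : {xy : ℤ × ℤ | xy.1 % 4 = 1 ∧ xy.2 % 4 = 1 ∧
        3*xy.1^2 + 5*xy.2^2 = 24*(p:ℤ)} = (∅ : Set (ℤ × ℤ)) := by
      rw [Set.eq_empty_iff_forall_notMem]
      rintro ⟨x, y⟩ ⟨hx4, hy4, heq⟩
      have h3y : (3:ℤ) ∣ y := by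
        refine Int.prime_three.dvd_of_dvd_pow (n := 2) ?_
        have : (3:ℤ) ∣ 5*y^2 := ⟨8*(p:ℤ) - x^2, by linarith⟩
        rcases Int.prime_three.dvd_mul.mp this with h'|h'
        · norm_num at h'
        · exact h'
      obtain ⟨z, rfl⟩ := h3y
      refine no8p p hp hp5 hm x z ?_
      refine mul_left_cancel₀ (show (3:ℤ) ≠ 0 by norm_num) ?_
      linear_combination heq
    rw [hempty, finsum_mem_empty]
  · unfold lam
    simp only [show (8*(5*(p:ℤ)-1)+3+5) = 40*(p:ℤ) from by ring]
    have hempty : {xy : ℤ × ℤ | xy.1 % 4 = 1 ∧ xy.2 % 4 = 1 ∧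
        3*xy.1^2 + 5*xy.2^2 = 40*(p:ℤ)} = (∅ : Set (ℤ × ℤ)) := by
      rw [Set.eq_empty_iff_forall_notMem]
      rintro ⟨x, y⟩ ⟨hx4, hy4, heq⟩
      have hprime5 : Prime (5:ℤ) := by rw [Int.prime_iff_natAbs_prime]; norm_num
      have h5x : (5:ℤ) ∣ x := by
        refine hprime5.dvd_of_dvd_pow (n := 2) ?_
        have : (5:ℤ) ∣ 3*x^2 := ⟨8*(p:ℤ) - y^2, by linarith⟩
        rcases hprime5.dvd_mul.mp this with h'|h'
        · norm_num at h'
        · exact h'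
      obtain ⟨w, rfl⟩ := h5x
      refine no8p p hp hp5 hm y w ?_
      refine mul_left_cancel₀ (show (5:ℤ) ≠ 0 by norm_num) ?_
      linear_combination heq
    rw [hempty, finsum_mem_empty]

theorem stmt17 (p : ℕ) (hp : p.Prime) (hp5 : 5 < p) :
    (¬ (p % 30 = 17 ∨ p % 30 = 23) →
      lam 3 5 (3 * (p : ℤ) - 1) = 0 ∧ lam 3 5 (5 * (p : ℤ) - 1) = 0) ∧
    ((p % 30 = 17 ∨ p % 30 = 23) →
      (∃ x y : ℤ, (p : ℤ) = 3 * x ^ 2 + 5 * y ^ 2) ∧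
      ∀ x y : ℤ, (p : ℤ) = 3 * x ^ 2 + 5 * y ^ 2 →
        lam 3 5 (3 * (p : ℤ) - 1) = 36 * x ^ 2 - 6 * (p : ℤ) ∧
        lam 3 5 (5 * (p : ℤ) - 1) = 10 * (p : ℤ) - 60 * x ^ 2) := by
  constructor
  · intro h30
    have h2 : p % 2 = 1 := (Nat.Prime.eq_two_or_odd hp).resolve_left (by omega)
    have h3 : p % 3 ≠ 0 := by
      intro h
      have := hp.eq_one_or_self_of_dvd 3 (Nat.dvd_of_mod_eq_zero h)
      omega
    have h5 : p % 5 ≠ 0 := by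
      intro h
      have := hp.eq_one_or_self_of_dvd 5 (Nat.dvd_of_mod_eq_zero h)
      omega
    have hm : p % 3 = 1 ∨ p % 5 = 1 ∨ p % 5 = 4 := by
      have e2 := Nat.mod_mod_of_dvd p (show 2 ∣ 30 by norm_num)
      have e3 := Nat.mod_mod_of_dvd p (show 3 ∣ 30 by norm_num)
      have e5 := Nat.mod_mod_of_dvd p (show 5 ∣ 30 by norm_num)
      have hr : p % 30 < 30 := Nat.mod_lt _ (by norm_num)
      interval_cases h : p % 30 <;> omega
    exact lam_zero p hp hp5 hm
  · intro h30
    obtain ⟨a, b, hab⟩ := exists_rep p hp hp5 h30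
    refine ⟨⟨a, b, hab⟩, ?_⟩
    intro x y hxy
    exact lam_eval p hp hp5 x y hxy
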